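/- Let $N\le T$, let $(\alpha_i)_{i=1}^N$, $(\gamma_t)_{t=1}^T$ be mutually independent i.i.d. random variables, and let $w$ be an integrable kernel degenerate in both arguments. Define the filtration $\mathcal{F}_0=\{\emptyset,\Omega\}$, $\mathcal{F}_{s}=\sigma(\alpha_1,\dots,\alpha_{s\wedge N},\gamma_1,\dots,\gamma_s)$ for $1\le s<T$, and set $U_s=\sum_{1\le t<s}w(\alpha_s,\gamma_t)+w(\alpha_s,\gamma_s)+\sum_{1\le i<s}w(\alpha_i,\gamma_s)$ for $s\le N$ and $U_s=\sum_{1\le i\le N}w(\alpha_i,\gamma_s)$ for $N<s\le T$. Then $(U_s,\mathcal{F}_s)_{s=1}^T$ is a martingale difference sequence: each $U_s$ is $\mathcal{F}_s$-measurable and $E[U_s\mid\mathcal{F}_{s-1}]=0$ a.s., and $\sum_{s=1}^T U_s=\sum_{i=1}^N\sum_{t=1}^T w(\alpha_i,\gamma_t)$. -/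

import Mathlib

/-!
If `X` is independent of a σ-algebra `m` and `V` is `m`-measurable, then
`E[f(X, V) | m] = g(V)` with `g(y) = ∫ f(x, y) dP_X(x)`. Applied to `m = σ(V)`, degeneracy of
`w` says exactly that `g = 0` a.e.
Every summand of `U_s` is `w(α_s, γ_t)` with `α_s` independent of `𝓕_{s-1} ∨ σ(γ_t)`, or
`w(α_i, γ_s)` with `α_i` being `𝓕_{s-1}`-measurable and `γ_s` independent of `𝓕_{s-1}`; by the
tower property both have zero conditional expectation given `𝓕_{s-1}`. The identity
`∑ U_s = ∑ w(α_i, γ_t)` holds because `U_s` collects the terms of the `N × T` grid whose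
indices have maximum `s`.
-/

open MeasureTheory ProbabilityTheory

namespace ProbabilityTheory

variable {Ω β γ E : Type*} {m m' mΩ : MeasurableSpace Ω} {μ : Measure Ω}
  [MeasurableSpace β] [MeasurableSpace γ] [NormedAddCommGroup E] [NormedSpace ℝ E]
  {X : Ω → β} {Y V : Ω → γ} {f : β → γ → E}

theorem iIndep.indep_of_le_biSup_compl {ι : Type*} {M : ι → MeasurableSpace Ω}
    (h : iIndep M μ) (hle : ∀ i, M i ≤ mΩ) (j : ι) (hm : m ≤ ⨆ i ∈ ({j}ᶜ : Set ι), M i) :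
    Indep (M j) m μ :=
  indep_of_indep_of_le_right (indep_of_indep_of_le_left
    (indep_iSup_of_disjoint hle h disjoint_compl_right)
    (le_iSup₂ (f := fun i (_ : i ∈ ({j} : Set ι)) => M i) j rfl)) hm

section

variable [CompleteSpace E]

theorem condExp_add_ae_eq_zero {g h : Ω → E} (hg : Integrable g μ) (hh : Integrable h μ)
    (hg0 : μ[g | m] =ᵐ[μ] 0) (hh0 : μ[h | m] =ᵐ[μ] 0) :
    μ[fun ω => g ω + h ω | m] =ᵐ[μ] 0 := by
  filter_upwards [condExp_add hg hh m, hg0, hh0] with ω hω hgω hhω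
  rw [show (fun ω => g ω + h ω) = g + h from rfl, hω, Pi.add_apply, hgω, hhω, Pi.zero_apply,
    add_zero]

theorem condExp_finsetSum_ae_eq_zero {ι : Type*} {s : Finset ι} {g : ι → Ω → E}
    (hint : ∀ i ∈ s, Integrable (g i) μ) (h : ∀ i ∈ s, μ[g i | m] =ᵐ[μ] 0) :
    μ[fun ω => ∑ i ∈ s, g i ω | m] =ᵐ[μ] 0 := by
  have hsum : μ[∑ i ∈ s, g i | m] =ᵐ[μ] ∑ i ∈ s, μ[g i | m] := condExp_finsetSum hint m
  simp only [Finset.sum_fn] at hsum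
  filter_upwards [hsum, (Filter.eventually_all_finset s).mpr h] with ω hω hzero
  simpa [hω] using Finset.sum_eq_zero hzero

end

variable [IsProbabilityMeasure μ]

theorem IndepFun.integral_comp_eq_integral_integral_map (hXY : IndepFun X Y μ)
    (hX : Measurable X) (hY : Measurable Y) (hf : StronglyMeasurable (Function.uncurry f))
    (hint : Integrable (fun ω => f (X ω) (Y ω)) μ) :
    ∫ ω, f (X ω) (Y ω) ∂μ = ∫ ω, ∫ x, f x (Y ω) ∂μ.map X ∂μ := by
  have hXYm : Measurable fun ω => (X ω, Y ω) := hX.prodMk hY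
  have hlaw : μ.map (fun ω => (X ω, Y ω)) = (μ.map X).prod (μ.map Y) :=
    (indepFun_iff_map_prod_eq_prod_map_map hX.aemeasurable hY.aemeasurable).mp hXY
  have hint' : Integrable (Function.uncurry f) ((μ.map X).prod (μ.map Y)) := by
    rw [← hlaw]
    exact (integrable_map_measure hf.aestronglyMeasurable hXYm.aemeasurable).mpr hint
  calc ∫ ω, f (X ω) (Y ω) ∂μ
      = ∫ z, Function.uncurry f z ∂(μ.map X).prod (μ.map Y) := by
        rw [← hlaw, integral_map hXYm.aemeasurable hf.aestronglyMeasurable]; rfl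
    _ = ∫ y, ∫ x, f x y ∂μ.map X ∂μ.map Y := integral_prod_symm _ hint'
    _ = ∫ ω, ∫ x, f x (Y ω) ∂μ.map X ∂μ :=
        integral_map hY.aemeasurable hf.integral_prod_left.aestronglyMeasurable

theorem IndepFun.integrable_integral_map (hXY : IndepFun X Y μ)
    (hX : Measurable X) (hY : Measurable Y) (hf : StronglyMeasurable (Function.uncurry f))
    (hint : Integrable (fun ω => f (X ω) (Y ω)) μ) :
    Integrable (fun ω => ∫ x, f x (Y ω) ∂μ.map X) μ := by
  have hlaw : μ.map (fun ω => (Y ω, X ω)) = (μ.map Y).prod (μ.map X) :=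
    (indepFun_iff_map_prod_eq_prod_map_map hY.aemeasurable hX.aemeasurable).mp hXY.symm
  have hswap : StronglyMeasurable fun z : γ × β => f z.2 z.1 := hf.comp_measurable measurable_swap
  have hint' : Integrable (fun z : γ × β => f z.2 z.1) ((μ.map Y).prod (μ.map X)) := by
    rw [← hlaw]
    exact (integrable_map_measure hswap.aestronglyMeasurable
      (hY.prodMk hX).aemeasurable).mpr hint
  exact (integrable_map_measure hf.integral_prod_left.aestronglyMeasurable
    hY.aemeasurable).mp hint'.integral_prod_left

variable [CompleteSpace E]

theorem condExp_comp_ae_eq_integral_map (hm : m ≤ mΩ) (hX : Measurable X)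
    (hV : Measurable[m] V) (hXm : Indep (MeasurableSpace.comap X ‹_›) m μ)
    (hf : StronglyMeasurable (Function.uncurry f)) (hint : Integrable (fun ω => f (X ω) (V ω)) μ) :
    μ[fun ω => f (X ω) (V ω) | m] =ᵐ[μ] fun ω => ∫ x, f x (V ω) ∂μ.map X := by
  have hXV : IndepFun X V μ :=
    (IndepFun_iff_Indep X V μ).mpr (indep_of_indep_of_le_right hXm hV.comap_le)
  have hg : StronglyMeasurable[m] fun ω => ∫ x, f x (V ω) ∂μ.map X :=
    hf.integral_prod_left.comp_measurable (f := fun y => ∫ x, f x y ∂μ.map X) hV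
  refine (ae_eq_condExp_of_forall_setIntegral_eq hm hint
    (fun A _ _ => (hXV.integrable_integral_map hX (hV.mono hm le_rfl) hf hint).integrableOn)
    (fun A hA _ => ?_) hg.aestronglyMeasurable).symm
  -- `(1_A, V)` is `m`-measurable, hence independent of `X`: Fubini applies to `1_A • f (X, V)`
  set W : Ω → ℝ × γ := fun ω => (A.indicator 1 ω, V ω)
  have hW : Measurable[m] W := (Measurable.indicator measurable_const hA).prodMk hV
  have hXW : IndepFun X W μ :=
    (IndepFun_iff_Indep X W μ).mpr (indep_of_indep_of_le_right hXm hW.comap_le)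
  have hF : StronglyMeasurable (Function.uncurry fun (x : β) (z : ℝ × γ) => z.1 • f x z.2) :=
    (measurable_fst.comp measurable_snd).stronglyMeasurable.smul
      (hf.comp_measurable (measurable_fst.prodMk (measurable_snd.comp measurable_snd)))
  have hAm : MeasurableSet A := hm A hA
  have hind : ∀ h : Ω → E, (fun ω => (W ω).1 • h ω) = A.indicator h := fun h => by
    funext ω; by_cases hω : ω ∈ A <;> simp [W, hω]
  have hFint : Integrable (fun ω => (W ω).1 • f (X ω) (V ω)) μ := by
    rw [hind]; exact hint.indicator hAm
  calc ∫ ω in A, ∫ x, f x (V ω) ∂μ.map X ∂μ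
      = ∫ ω, (W ω).1 • ∫ x, f x (V ω) ∂μ.map X ∂μ := by
        rw [hind, integral_indicator hAm]
    _ = ∫ ω, (W ω).1 • f (X ω) (V ω) ∂μ := by
        rw [hXW.integral_comp_eq_integral_integral_map (f := fun x z => z.1 • f x z.2) hX
          (hW.mono hm le_rfl) hF hFint]
        simp_rw [integral_smul]
        rfl
    _ = ∫ ω in A, f (X ω) (V ω) ∂μ := by
        rw [hind, integral_indicator hAm]

theorem ae_integral_map_eq_zero_of_condExp_comap_eq_zero (hXV : IndepFun X V μ)
    (hX : Measurable X) (hV : Measurable V) (hf : StronglyMeasurable (Function.uncurry f))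
    (hint : Integrable (fun ω => f (X ω) (V ω)) μ)
    (hdeg : μ[fun ω => f (X ω) (V ω) | MeasurableSpace.comap V ‹_›] =ᵐ[μ] 0) :
    ∀ᵐ y ∂μ.map V, ∫ x, f x y ∂μ.map X = 0 := by
  have hcond := condExp_comp_ae_eq_integral_map hV.comap_le hX (comap_measurable V)
    ((IndepFun_iff_Indep X V μ).mp hXV) hf hint
  have hg : StronglyMeasurable fun y => ∫ x, f x y ∂μ.map X := hf.integral_prod_left
  exact (ae_map_iff hV.aemeasurable (hg.measurableSet_eq_fun stronglyMeasurable_const)).mpr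
    (hcond.symm.trans hdeg)

theorem condExp_comp_ae_eq_zero (hm : m ≤ m') (hm' : m' ≤ mΩ) (hX : Measurable X)
    (hV : Measurable[m'] V) (hXm : Indep (MeasurableSpace.comap X ‹_›) m' μ)
    (hf : StronglyMeasurable (Function.uncurry f)) (hint : Integrable (fun ω => f (X ω) (V ω)) μ)
    (hnull : ∀ᵐ y ∂μ.map V, ∫ x, f x y ∂μ.map X = 0) :
    μ[fun ω => f (X ω) (V ω) | m] =ᵐ[μ] 0 :=
  calc μ[fun ω => f (X ω) (V ω) | m]
      =ᵐ[μ] μ[μ[fun ω => f (X ω) (V ω) | m'] | m] := (condExp_condExp_of_le hm hm').symm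
    _ =ᵐ[μ] μ[fun ω => ∫ x, f x (V ω) ∂μ.map X | m] :=
        condExp_congr_ae (condExp_comp_ae_eq_integral_map hm' hX hV hXm hf hint)
    _ =ᵐ[μ] μ[0 | m] := condExp_congr_ae (ae_of_ae_map (hV.mono hm' le_rfl).aemeasurable hnull)
    _ = 0 := condExp_zero

end ProbabilityTheory

open ProbabilityTheory Finset

/-- The increment `U_s` of the construction, for `a i t = w(α_i, γ_t)`. -/
def diagIncrement {M : Type*} [AddCommMonoid M] (a : ℕ → ℕ → M) (N s : ℕ) : M :=
  if s ≤ N then (∑ t ∈ Ico 1 s, a s t) + a s s + ∑ i ∈ Ico 1 s, a i s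
  else ∑ i ∈ Icc 1 N, a i s

section Telescoping

variable {M : Type*} [AddCommMonoid M] (a : ℕ → ℕ → M) {N : ℕ}

theorem sum_diagIncrement_of_le {n : ℕ} (hn : n ≤ N) :
    ∑ s ∈ Icc 1 n, diagIncrement a N s = ∑ i ∈ Icc 1 n, ∑ t ∈ Icc 1 n, a i t := by
  induction n with
  | zero => simp
  | succ n ih =>
    have hrow : ∀ i, ∑ t ∈ Icc 1 (n + 1), a i t = ∑ t ∈ Icc 1 n, a i t + a i (n + 1) :=
      fun i => sum_Icc_succ_top (by omega) _
    rw [sum_Icc_succ_top (by omega), ih (by omega), diagIncrement, if_pos hn,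
      Ico_add_one_right_eq_Icc, sum_Icc_succ_top (by omega)]
    simp only [hrow, sum_add_distrib]
    abel

theorem sum_diagIncrement {T : ℕ} (hNT : N ≤ T) :
    ∑ s ∈ Icc 1 T, diagIncrement a N s = ∑ i ∈ Icc 1 N, ∑ t ∈ Icc 1 T, a i t := by
  induction T, hNT using Nat.le_induction with
  | base => exact sum_diagIncrement_of_le a le_rfl
  | succ T hNT ih =>
    rw [sum_Icc_succ_top (by omega), ih, diagIncrement, if_neg (by omega), ← sum_add_distrib]
    exact sum_congr rfl fun i _ => (sum_Icc_succ_top (by omega) _).symm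

end Telescoping

abbrev diagFiltration {Ω β : Type*} [MeasurableSpace β] (α γ : ℕ → Ω → β) (N s : ℕ) :
    MeasurableSpace Ω :=
  (⨆ i ∈ Icc 1 (min s N), MeasurableSpace.comap (α i) inferInstance) ⊔
    ⨆ t ∈ Icc 1 s, MeasurableSpace.comap (γ t) inferInstance

section Diagonal

variable {Ω β : Type*} {mΩ : MeasurableSpace Ω} {μ : Measure Ω} [MeasurableSpace β]
  {α γ : ℕ → Ω → β} {N s : ℕ}

theorem measurable_diagFiltration_left {i : ℕ} (hi : i ∈ Icc 1 (min s N)) :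
    Measurable[diagFiltration α γ N s] (α i) :=
  measurable_iff_comap_le.mpr <| (le_iSup₂
    (f := fun i (_ : i ∈ Icc 1 (min s N)) => MeasurableSpace.comap (α i) inferInstance) i hi).trans
    le_sup_left

theorem measurable_diagFiltration_right {t : ℕ} (ht : t ∈ Icc 1 s) :
    Measurable[diagFiltration α γ N s] (γ t) :=
  measurable_iff_comap_le.mpr <| (le_iSup₂
    (f := fun t (_ : t ∈ Icc 1 s) => MeasurableSpace.comap (γ t) inferInstance) t ht).trans
    le_sup_right

theorem diagFiltration_le (hα : ∀ i, Measurable (α i)) (hγ : ∀ t, Measurable (γ t)) :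
    diagFiltration α γ N s ≤ mΩ :=
  sup_le (iSup₂_le fun i _ => (hα i).comap_le) (iSup₂_le fun t _ => (hγ t).comap_le)

theorem diagFiltration_le_biSup {S : Set (ℕ ⊕ ℕ)} (hαS : ∀ i ∈ Icc 1 (min s N), Sum.inl i ∈ S)
    (hγS : ∀ t ∈ Icc 1 s, Sum.inr t ∈ S) :
    diagFiltration α γ N s ≤ ⨆ n ∈ S, MeasurableSpace.comap (Sum.elim α γ n) inferInstance :=
  sup_le (iSup₂_le fun i hi => le_iSup₂
      (f := fun n (_ : n ∈ S) => MeasurableSpace.comap (Sum.elim α γ n) inferInstance) _ (hαS i hi))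
    (iSup₂_le fun t ht => le_iSup₂
      (f := fun n (_ : n ∈ S) => MeasurableSpace.comap (Sum.elim α γ n) inferInstance) _ (hγS t ht))

theorem indep_comap_left_diagFiltration_sup (h : iIndepFun (Sum.elim α γ) μ)
    (hα : ∀ i, Measurable (α i)) (hγ : ∀ t, Measurable (γ t)) (hs : 1 ≤ s) (t : ℕ) :
    Indep (MeasurableSpace.comap (α s) inferInstance)
      (diagFiltration α γ N (s - 1) ⊔ MeasurableSpace.comap (γ t) inferInstance) μ :=
  h.iIndep.indep_of_le_biSup_compl (Sum.forall.mpr ⟨fun i => (hα i).comap_le,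
      fun t => (hγ t).comap_le⟩) (Sum.inl s)
    (sup_le (diagFiltration_le_biSup (fun i hi => by simp at hi ⊢; omega) fun _ _ => by simp)
      (le_iSup₂ (f := fun n (_ : n ∈ ({Sum.inl s}ᶜ : Set (ℕ ⊕ ℕ))) =>
        MeasurableSpace.comap (Sum.elim α γ n) inferInstance) (Sum.inr t) (by simp)))

theorem indep_comap_right_diagFiltration (h : iIndepFun (Sum.elim α γ) μ)
    (hα : ∀ i, Measurable (α i)) (hγ : ∀ t, Measurable (γ t)) (hs : 1 ≤ s) :
    Indep (MeasurableSpace.comap (γ s) inferInstance) (diagFiltration α γ N (s - 1)) μ :=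
  h.iIndep.indep_of_le_biSup_compl (Sum.forall.mpr ⟨fun i => (hα i).comap_le,
      fun t => (hγ t).comap_le⟩) (Sum.inr s)
    (diagFiltration_le_biSup (fun _ _ => by simp) (fun t ht => by simp at ht ⊢; omega))

variable {w : β → β → ℝ}

theorem measurable_diagIncrement (hw : Measurable (Function.uncurry w)) (hs : 1 ≤ s) :
    Measurable[diagFiltration α γ N s]
      fun ω => diagIncrement (fun i t => w (α i ω) (γ t ω)) N s := by
  have hterm : ∀ i ∈ Icc 1 (min s N), ∀ t ∈ Icc 1 s,
      Measurable[diagFiltration α γ N s] fun ω => w (α i ω) (γ t ω) := fun i hi t ht =>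
    hw.comp ((measurable_diagFiltration_left hi).prodMk (measurable_diagFiltration_right ht))
  unfold diagIncrement
  split_ifs with hsN
  · refine ((measurable_sum _ fun t ht => hterm _ ?_ _ ?_).add (hterm _ ?_ _ ?_)).add
      (measurable_sum _ fun i hi => hterm _ ?_ _ ?_) <;>
      simp only [mem_Icc, mem_Ico] at * <;> omega
  · exact measurable_sum _ fun i hi => hterm _ (by simp only [mem_Icc] at *; omega) _
      (by simp only [mem_Icc]; omega)

theorem condExp_diagIncrement_ae_eq_zero [IsProbabilityMeasure μ]
    (h : iIndepFun (Sum.elim α γ) μ) (hα : ∀ i, Measurable (α i)) (hγ : ∀ t, Measurable (γ t))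
    (hw : Measurable (Function.uncurry w))
    (hint : ∀ i t, Integrable (fun ω => w (α i ω) (γ t ω)) μ)
    (hdegα : ∀ i t, ∀ᵐ x ∂μ.map (α i), ∫ y, w x y ∂μ.map (γ t) = 0)
    (hdegγ : ∀ i t, ∀ᵐ y ∂μ.map (γ t), ∫ x, w x y ∂μ.map (α i) = 0) (hs : 1 ≤ s) :
    μ[fun ω => diagIncrement (fun i t => w (α i ω) (γ t ω)) N s |
      diagFiltration α γ N (s - 1)] =ᵐ[μ] 0 := by
  have hF : diagFiltration α γ N (s - 1) ≤ mΩ := diagFiltration_le hα hγ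
  have hleft : ∀ t, μ[fun ω => w (α s ω) (γ t ω) | diagFiltration α γ N (s - 1)] =ᵐ[μ] 0 :=
    fun t => condExp_comp_ae_eq_zero le_sup_left (sup_le hF (hγ t).comap_le) (hα s)
      ((comap_measurable (γ t)).mono le_sup_right le_rfl)
      (indep_comap_left_diagFiltration_sup h hα hγ hs t) hw.stronglyMeasurable (hint s t)
      (hdegγ s t)
  have hright : ∀ i ∈ Icc 1 (min (s - 1) N),
      μ[fun ω => w (α i ω) (γ s ω) | diagFiltration α γ N (s - 1)] =ᵐ[μ] 0 :=
    fun i hi => condExp_comp_ae_eq_zero (f := fun x y => w y x) le_rfl hF (hγ s)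
      (measurable_diagFiltration_left hi) (indep_comap_right_diagFiltration h hα hγ hs)
      (hw.comp measurable_swap).stronglyMeasurable (hint i s) (hdegα i s)
  unfold diagIncrement
  split_ifs with hsN
  · refine condExp_add_ae_eq_zero ((integrable_finsetSum _ fun t _ => hint s t).add (hint s s))
      (integrable_finsetSum _ fun i _ => hint i s)
      (condExp_add_ae_eq_zero (integrable_finsetSum _ fun t _ => hint s t) (hint s s)
        (condExp_finsetSum_ae_eq_zero (fun t _ => hint s t) fun t _ => hleft t) (hleft s))
      (condExp_finsetSum_ae_eq_zero (fun i _ => hint i s) fun i hi => hright i ?_)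
    simp only [mem_Ico, mem_Icc] at hi ⊢; omega
  · exact condExp_finsetSum_ae_eq_zero (fun i _ => hint i s)
      fun i hi => hright i (by simp only [mem_Icc] at hi ⊢; omega)

end Diagonal

theorem diagonal_martingale_difference_construction_general
    {Ω : Type*} [MeasurableSpace Ω] {μ : Measure Ω} [IsProbabilityMeasure μ]
    (α γ : ℕ → Ω → ℝ) (w : ℝ → ℝ → ℝ)
    (hmeas : Measurable (Function.uncurry w))
    (hmα : ∀ i, Measurable (α i)) (hmγ : ∀ t, Measurable (γ t))
    (hindep : iIndepFun
      (Sum.elim α γ) μ)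
    (hidα : ∀ i, Measure.map (α i) μ = Measure.map (α 1) μ)
    (hidγ : ∀ t, Measure.map (γ t) μ = Measure.map (γ 1) μ)
    (hint : ∀ i t, Integrable (fun ω => w (α i ω) (γ t ω)) μ)
    (hdegα : μ[(fun ω => w (α 1 ω) (γ 1 ω)) |
      MeasurableSpace.comap (α 1) inferInstance] =ᵐ[μ] 0)
    (hdegγ : μ[(fun ω => w (α 1 ω) (γ 1 ω)) |
      MeasurableSpace.comap (γ 1) inferInstance] =ᵐ[μ] 0)
    (N T : ℕ) (hNT : N ≤ T) :
    (let F : ℕ → MeasurableSpace Ω := fun s =>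
       (⨆ i ∈ Finset.Icc 1 (min s N), MeasurableSpace.comap (α i) inferInstance) ⊔
         ⨆ t ∈ Finset.Icc 1 s, MeasurableSpace.comap (γ t) inferInstance
     let U : ℕ → Ω → ℝ := fun s ω =>
       if s ≤ N then
         (∑ t ∈ Finset.Ico 1 s, w (α s ω) (γ t ω)) + w (α s ω) (γ s ω) +
           ∑ i ∈ Finset.Ico 1 s, w (α i ω) (γ s ω)
       else ∑ i ∈ Finset.Icc 1 N, w (α i ω) (γ s ω)
     (∀ s ∈ Finset.Icc 1 T, Measurable[F s] (U s)) ∧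
     (∀ s ∈ Finset.Icc 1 T, μ[U s | F (s - 1)] =ᵐ[μ] 0) ∧
     (fun ω => ∑ s ∈ Finset.Icc 1 T, U s ω) =
       fun ω => ∑ i ∈ Finset.Icc 1 N, ∑ t ∈ Finset.Icc 1 T, w (α i ω) (γ t ω)) := by
  intro F U
  have hαγ : IndepFun (α 1) (γ 1) μ :=
    hindep.indepFun (i := Sum.inl 1) (j := Sum.inr 1) Sum.inl_ne_inr
  have hnullα : ∀ i t, ∀ᵐ x ∂μ.map (α i), ∫ y, w x y ∂μ.map (γ t) = 0 := fun i t => by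
    rw [hidα i, hidγ t]
    exact ae_integral_map_eq_zero_of_condExp_comap_eq_zero (f := fun y x => w x y) hαγ.symm
      (hmγ 1) (hmα 1) (hmeas.comp measurable_swap).stronglyMeasurable (hint 1 1) hdegα
  have hnullγ : ∀ i t, ∀ᵐ y ∂μ.map (γ t), ∫ x, w x y ∂μ.map (α i) = 0 := fun i t => by
    rw [hidα i, hidγ t]
    exact ae_integral_map_eq_zero_of_condExp_comap_eq_zero hαγ (hmα 1) (hmγ 1)
      hmeas.stronglyMeasurable (hint 1 1) hdegγ
  refine ⟨fun s hs => measurable_diagIncrement hmeas (mem_Icc.mp hs).1,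
    fun s hs => condExp_diagIncrement_ae_eq_zero hindep hmα hmγ hmeas hint hnullα hnullγ
      (mem_Icc.mp hs).1,
    funext fun ω => sum_diagIncrement _ hNT⟩

/-- The diagonal martingale-difference construction for degenerate two-sample
U-statistics: `(U_s, 𝓕_s)` is a martingale difference sequence and
`∑_{s=1}^T U_s = ∑_{i=1}^N ∑_{t=1}^T w(αᵢ,γₜ)`. -/
theorem diagonal_martingale_difference_construction
    {Ω : Type*} [MeasurableSpace Ω] {μ : Measure Ω} [IsProbabilityMeasure μ]
    (α γ : ℕ → Ω → ℝ) (w : ℝ → ℝ → ℝ)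
    (hmeas : Measurable (Function.uncurry w))
    (hmα : ∀ i, Measurable (α i)) (hmγ : ∀ t, Measurable (γ t))
    (hindep : iIndepFun
      (Sum.elim α γ) μ)
    (hidα : ∀ i, Measure.map (α i) μ = Measure.map (α 1) μ)
    (hidγ : ∀ t, Measure.map (γ t) μ = Measure.map (γ 1) μ)
    (hint : ∀ i t, Integrable (fun ω => w (α i ω) (γ t ω)) μ)
    (hdegα : μ[(fun ω => w (α 1 ω) (γ 1 ω)) |
      MeasurableSpace.comap (α 1) inferInstance] =ᵐ[μ] 0)
    (hdegγ : μ[(fun ω => w (α 1 ω) (γ 1 ω)) |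
      MeasurableSpace.comap (γ 1) inferInstance] =ᵐ[μ] 0)
    (N T : ℕ) (hN : 1 ≤ N) (hNT : N ≤ T) :
    (let F : ℕ → MeasurableSpace Ω := fun s =>
       (⨆ i ∈ Finset.Icc 1 (min s N), MeasurableSpace.comap (α i) inferInstance) ⊔
         ⨆ t ∈ Finset.Icc 1 s, MeasurableSpace.comap (γ t) inferInstance
     let U : ℕ → Ω → ℝ := fun s ω =>
       if s ≤ N then
         (∑ t ∈ Finset.Ico 1 s, w (α s ω) (γ t ω)) + w (α s ω) (γ s ω) +
           ∑ i ∈ Finset.Ico 1 s, w (α i ω) (γ s ω)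
       else ∑ i ∈ Finset.Icc 1 N, w (α i ω) (γ s ω)
     (∀ s ∈ Finset.Icc 1 T, Measurable[F s] (U s)) ∧
     (∀ s ∈ Finset.Icc 1 T, μ[U s | F (s - 1)] =ᵐ[μ] 0) ∧
     (fun ω => ∑ s ∈ Finset.Icc 1 T, U s ω) =
       fun ω => ∑ i ∈ Finset.Icc 1 N, ∑ t ∈ Finset.Icc 1 T, w (α i ω) (γ t ω)) :=
  diagonal_martingale_difference_construction_general α γ w hmeas hmα hmγ hindep hidα hidγ hint
    hdegα hdegγ N T hNT
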